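/- Let Z → X ← U be maps in a topos E, and suppose X is the colimit of a small diagram F : K → E. Then j : U → X is a complement of i : Z → X if and only if for every p in K, the base change of j along F(p) → X is a complement of the base change of i along F(p) → X. -/

import Mathlib

open CategoryTheory Limits Opposite

universe v u

/-- Maps `i : Z ⟶ X` and `j : U ⟶ X` are *disjoint* if every commutative square
over them has initial top-left vertex. -/
def AreDisjoint {C : Type u} [Category.{v} C] {Z X U : C} (i : Z ⟶ X) (j : U ⟶ X) : Prop :=
  ∀ (A : C) (a : A ⟶ Z) (b : A ⟶ U), a ≫ i = b ≫ j → Nonempty (IsInitial A)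

/-- `j` is a complement of `i`. -/
def IsComplementOf {C : Type u} [Category.{v} C] {Z X U : C} (i : Z ⟶ X) (j : U ⟶ X) : Prop :=
  Mono j ∧ AreDisjoint i j ∧
    ∀ (V : C) (v : V ⟶ X), AreDisjoint i v → ∃ k : V ⟶ U, k ≫ j = v

/-!
Base change along any map preserves monomorphisms, disjointness and the factorization property,
which gives one direction. Conversely, every section of `X = colim F` lifts, locally on the site,
to a section of some `F p`, since `X` is the sheafification of the presheaf colimit. Testing
against sheafified representables, each of the three conditions on `j` becomes a local statement
about maps that factor through some `F p ⟶ X`, where it is the corresponding condition on the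
base changes. For disjointness this uses that a sheaf is initial iff every object over which it
has a section is covered by the empty sieve.
-/

section Disjointness

variable {C : Type u} [Category.{v} C] {Z X U : C}

lemma AreDisjoint.comp_right {i : Z ⟶ X} {j : U ⟶ X} (h : AreDisjoint i j) {V : C}
    (g : V ⟶ U) : AreDisjoint i (g ≫ j) :=
  fun A a b hab => h A a (b ≫ g) (by rw [hab, Category.assoc])

lemma areDisjoint_pullback_snd_iff (i : Z ⟶ X) {Y V : C} (g : Y ⟶ X) [HasPullback i g]
    (v : V ⟶ Y) : AreDisjoint (pullback.snd i g) v ↔ AreDisjoint i (v ≫ g) := by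
  constructor
  · intro h A a b hab
    exact h A (pullback.lift a (b ≫ v) (by rw [hab, Category.assoc])) b (pullback.lift_snd _ _ _)
  · intro h A a b hab
    refine h A (a ≫ pullback.fst i g) b ?_
    rw [Category.assoc, pullback.condition, ← Category.assoc, hab, Category.assoc]

lemma AreDisjoint.pullback_snd {i : Z ⟶ X} {j : U ⟶ X} (h : AreDisjoint i j) {Y : C}
    (g : Y ⟶ X) [HasPullback i g] [HasPullback j g] :
    AreDisjoint (pullback.snd i g) (pullback.snd j g) := by
  rw [areDisjoint_pullback_snd_iff, ← pullback.condition]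
  exact h.comp_right _

lemma IsComplementOf.pullback_snd {i : Z ⟶ X} {j : U ⟶ X} (h : IsComplementOf i j) {Y : C}
    (g : Y ⟶ X) [HasPullback i g] [HasPullback j g] :
    IsComplementOf (pullback.snd i g) (pullback.snd j g) := by
  obtain ⟨hmono, hdisj, hmax⟩ := h
  refine ⟨inferInstance, hdisj.pullback_snd g, fun V v hv => ?_⟩
  obtain ⟨k, hk⟩ := hmax V (v ≫ g) ((areDisjoint_pullback_snd_iff i g v).1 hv)
  exact ⟨pullback.lift k v hk, pullback.lift_snd _ _ _⟩

lemma eq_of_comp_eq_comp_of_mono_pullback_snd {j : U ⟶ X} {Y T : C} {g : Y ⟶ X}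
    [HasPullback j g] [Mono (pullback.snd j g)] {a b : T ⟶ U} (y : T ⟶ Y)
    (ha : a ≫ j = y ≫ g) (hb : b ≫ j = y ≫ g) : a = b := by
  have : pullback.lift a y ha = pullback.lift b y hb := by
    rw [← cancel_mono (pullback.snd j g), pullback.lift_snd, pullback.lift_snd]
  simpa only [pullback.lift_fst] using congrArg (· ≫ pullback.fst j g) this

end Disjointness

namespace CategoryTheory.Sheaf

variable {C : Type v} [SmallCategory C] {J : GrothendieckTopology C}

variable (J) in
noncomputable abbrev sheafifiedYoneda (d : C) : Sheaf J (Type v) :=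
  (presheafToSheaf J (Type v)).obj (yoneda.obj d)

noncomputable def homOfSection {P : Sheaf J (Type v)} {d : C} (s : P.obj.obj (op d)) :
    sheafifiedYoneda J d ⟶ P :=
  ((sheafificationAdjunction J (Type v)).homEquiv (yoneda.obj d) P).symm (yonedaEquiv.symm s)

lemma homOfSection_bijective {P : Sheaf J (Type v)} {d : C} :
    Function.Bijective (homOfSection (P := P) (d := d)) :=
  (yonedaEquiv.symm.trans ((sheafificationAdjunction J (Type v)).homEquiv _ P).symm).bijective

lemma homOfSection_comp {P Q : Sheaf J (Type v)} {d : C} (s : P.obj.obj (op d)) (t : P ⟶ Q) :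
    homOfSection s ≫ t = homOfSection (t.hom.app (op d) s) := by
  dsimp only [homOfSection]
  rw [← yonedaEquiv_symm_naturality_right]
  exact (Adjunction.homEquiv_naturality_right_symm _ _ _).symm

lemma homOfSection_map_comp {P Q : Sheaf J (Type v)} {d e : C} (s : P.obj.obj (op d))
    (f : e ⟶ d) (t : P ⟶ Q) :
    homOfSection (P.obj.map f.op s) ≫ t = homOfSection (Q.obj.map f.op (t.hom.app (op d) s)) := by
  rw [homOfSection_comp, NatTrans.naturality_apply]

lemma bot_mem_of_isInitial {A : Sheaf J (Type v)} (hA : IsInitial A) {d : C}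
    (s : A.obj.obj (op d)) : ⊥ ∈ J d := by
  -- `s` maps to a section of the sheafified empty presheaf, which lifts along no sieve but `⊥`.
  let E : Cᵒᵖ ⥤ Type v := (Functor.const Cᵒᵖ).obj PEmpty
  have := Presheaf.imageSieve_mem J (toSheafify J E)
    ((hA.to ((presheafToSheaf J (Type v)).obj E)).hom.app (op d) s)
  convert this
  ext e f
  simp [Presheaf.imageSieve, E]

noncomputable abbrev uniqueOfBotMem (B : Sheaf J (Type v)) {d : Cᵒᵖ} (h : ⊥ ∈ J d.unop) :
    Unique (B.obj.obj d) :=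
  Types.isTerminalEquivUnique _ (B.isTerminalOfBotCover d.unop h)

noncomputable def isInitialOfBotMem {A : Sheaf J (Type v)}
    (h : ∀ (d : Cᵒᵖ) (_ : A.obj.obj d), ⊥ ∈ J d.unop) : IsInitial A :=
  IsInitial.ofUniqueHom
    (fun B => ⟨{
      app d := TypeCat.ofHom fun s => (uniqueOfBotMem B (h d s)).default
      naturality _ d' f := by
        ext s
        exact (uniqueOfBotMem B (h d' (A.obj.map f s))).instSubsingleton.elim _ _ }⟩)
    (fun B _ => by
      ext d s
      exact (uniqueOfBotMem B (h d s)).instSubsingleton.elim _ _)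

lemma exists_comp_eq_of_range_le {X U V : Sheaf J (Type v)} (j : U ⟶ X) [Mono j] (v : V ⟶ X)
    (h : Subfunctor.range v.hom ≤ Subfunctor.range j.hom) : ∃ k : V ⟶ U, k ≫ j = v := by
  have : Mono j.hom := inferInstanceAs (Mono ((sheafToPresheaf J _).map j))
  refine ⟨⟨Subfunctor.lift v.hom h ≫ inv (Subfunctor.toRange j.hom)⟩, ?_⟩
  apply Sheaf.hom_ext
  change Subfunctor.lift v.hom h ≫ inv (Subfunctor.toRange j.hom) ≫ j.hom = v.hom
  have hj : inv (Subfunctor.toRange j.hom) ≫ j.hom = (Subfunctor.range j.hom).ι := by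
    rw [IsIso.inv_comp_eq, Subfunctor.toRange_ι]
  rw [hj, Subfunctor.lift_ι]

lemma isSheaf_range {U X : Sheaf J (Type v)} (j : U ⟶ X) [Mono j] :
    Presieve.IsSheaf J (Subfunctor.range j.hom).toFunctor :=
  have : Mono j.hom := inferInstanceAs (Mono ((sheafToPresheaf J _).map j))
  Presieve.isSheaf_iso J (asIso (Subfunctor.toRange j.hom))
    ((isSheaf_iff_isSheaf_of_type _ _).1 U.property)

section Colimit

variable {K : Type v} [SmallCategory K] {F : K ⥤ Sheaf J (Type v)} {c : Cocone F}

lemma iSup_imageSieve_mem_of_isColimit (hc : IsColimit c) {d : C} (x : c.pt.obj.obj (op d)) :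
    (⨆ p, Presheaf.imageSieve (c.ι.app p).hom x) ∈ J d := by
  let E := colimit.cocone (F ⋙ sheafToPresheaf J (Type v))
  have hE := isColimitSheafifyCocone E (colimit.isColimit _)
  let e := hc.coconePointUniqueUpToIso hE
  let ψ : E.pt ⟶ (sheafifyCocone E).pt.obj := toSheafify J E.pt
  have : Presheaf.IsLocallySurjective J ψ :=
    inferInstanceAs (Presheaf.IsLocallySurjective J (toSheafify J E.pt))
  let φ := ψ ≫ e.inv.hom
  have hφ : ∀ p, E.ι.app p ≫ φ = (c.ι.app p).hom := by
    intro p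
    rw [← hc.comp_coconePointUniqueUpToIso_inv hE p, ObjectProperty.FullSubcategory.comp_hom,
      sheafifyCocone_ι_app_val]
    rfl
  refine J.superset_covering ?_ (Presheaf.imageSieve_mem J φ x)
  rintro e f ⟨t, ht⟩
  obtain ⟨p, z, rfl⟩ := Types.jointly_surjective_of_isColimit
    (isColimitOfPreserves ((evaluation _ _).obj (op e)) (colimit.isColimit _)) t
  refine le_iSup (fun p => Presheaf.imageSieve (c.ι.app p).hom x) p _ ⟨z, ?_⟩
  rw [← hφ p]
  exact ht

lemma exists_cover_homOfSection_comp_eq (hc : IsColimit c) {T : Sheaf J (Type v)}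
    (t : T ⟶ c.pt) {d : C} (s : T.obj.obj (op d)) :
    ∃ S ∈ J d, ∀ ⦃e : C⦄ (f : e ⟶ d), S f →
      ∃ (p : K) (y : sheafifiedYoneda J e ⟶ F.obj p),
        homOfSection (T.obj.map f.op s) ≫ t = y ≫ c.ι.app p := by
  refine ⟨_, iSup_imageSieve_mem_of_isColimit hc (t.hom.app _ s), fun e f hf => ?_⟩
  rw [iSup, Sieve.sSup_apply] at hf
  obtain ⟨_, ⟨p, rfl⟩, z, hz⟩ := hf
  exact ⟨p, homOfSection z, by rw [homOfSection_map_comp, homOfSection_comp, hz]; rfl⟩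

lemma mono_of_mono_pullback_snd (hc : IsColimit c) {U : Sheaf J (Type v)} (j : U ⟶ c.pt)
    (h : ∀ p, Mono (pullback.snd j (c.ι.app p))) : Mono j := by
  suffices IsLocallyInjective j from mono_of_isLocallyInjective j
  refine ⟨fun {d} u u' huu => ?_⟩
  obtain ⟨S, hS, hfac⟩ := exists_cover_homOfSection_comp_eq hc j u
  refine J.superset_covering (fun e f hf => ?_) hS
  obtain ⟨p, y, hy⟩ := hfac f hf
  refine homOfSection_bijective.1 (eq_of_comp_eq_comp_of_mono_pullback_snd y hy ?_)
  rw [homOfSection_map_comp, ← huu, ← homOfSection_map_comp, hy]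

lemma areDisjoint_of_areDisjoint_pullback_snd (hc : IsColimit c) {Z U : Sheaf J (Type v)}
    (i : Z ⟶ c.pt) (j : U ⟶ c.pt)
    (h : ∀ p, AreDisjoint (pullback.snd i (c.ι.app p)) (pullback.snd j (c.ι.app p))) :
    AreDisjoint i j := by
  intro A a b hab
  refine ⟨isInitialOfBotMem fun d s => ?_⟩
  obtain ⟨S, hS, hfac⟩ := exists_cover_homOfSection_comp_eq hc (a ≫ i) s
  refine J.transitive hS ⊥ fun e f hf => ?_
  rw [Sieve.pullback_bot]
  obtain ⟨p, y, hy⟩ := hfac f hf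
  rw [← Category.assoc] at hy
  obtain ⟨hinit⟩ := h p _ (pullback.lift _ y hy)
    (pullback.lift (homOfSection (A.obj.map f.op s) ≫ b) y (by rwa [Category.assoc, ← hab]))
    (by rw [pullback.lift_snd, pullback.lift_snd])
  obtain ⟨s₀, -⟩ := homOfSection_bijective.2 (𝟙 (sheafifiedYoneda J e))
  exact bot_mem_of_isInitial hinit s₀

lemma exists_comp_eq_of_pullback_snd (hc : IsColimit c) {Z U V : Sheaf J (Type v)}
    (i : Z ⟶ c.pt) (j : U ⟶ c.pt) [Mono j]
    (h : ∀ p (W : Sheaf J (Type v)) (w : W ⟶ F.obj p),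
      AreDisjoint (pullback.snd i (c.ι.app p)) w → ∃ k, k ≫ pullback.snd j (c.ι.app p) = w)
    (v : V ⟶ c.pt) (hv : AreDisjoint i v) : ∃ k, k ≫ j = v := by
  refine exists_comp_eq_of_range_le j v ?_
  rintro d _ ⟨s, rfl⟩
  refine (Subfunctor.isSheaf_iff _ ((isSheaf_iff_isSheaf_of_type _ _).1 c.pt.property)).1
    (isSheaf_range j) d _ ?_
  obtain ⟨S, hS, hfac⟩ := exists_cover_homOfSection_comp_eq hc v s
  refine J.superset_covering (fun e f hf => ?_) hS
  obtain ⟨p, y, hy⟩ := hfac f hf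
  have hdisj : AreDisjoint (pullback.snd i (c.ι.app p)) y := by
    rw [areDisjoint_pullback_snd_iff, ← hy]
    exact hv.comp_right _
  obtain ⟨m, hm⟩ := h p _ y hdisj
  obtain ⟨t, ht⟩ := homOfSection_bijective.2 (m ≫ pullback.fst j (c.ι.app p))
  refine ⟨t, homOfSection_bijective.1 ?_⟩
  rw [← homOfSection_comp, ht, Category.assoc, pullback.condition, ← Category.assoc, hm, ← hy,
    homOfSection_map_comp]

end Colimit

end CategoryTheory.Sheaf

/-- In a (Grothendieck) topos `E = Sheaf J (Type _)`, given maps `Z → X ← U` and a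
presentation of `X` as a colimit of a small diagram `F : K ⥤ E`, the map `j : U ⟶ X` is a
complement of `i : Z ⟶ X` if and only if for every `p : K` the base change of `j` along
`F.obj p ⟶ X` is a complement of the base change of `i` along `F.obj p ⟶ X`. -/
theorem isComplement_iff_locally_on_colimit
    {C : Type v} [SmallCategory C] (J : GrothendieckTopology C)
    {K : Type v} [SmallCategory K] (F : K ⥤ Sheaf J (Type v))
    (c : Cocone F) (hc : IsColimit c)
    {Z U : Sheaf J (Type v)} (i : Z ⟶ c.pt) (j : U ⟶ c.pt) :
    IsComplementOf i j ↔
      ∀ p : K,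
        IsComplementOf (pullback.snd i (c.ι.app p)) (pullback.snd j (c.ι.app p)) := by
  constructor
  · exact fun h p => h.pullback_snd (c.ι.app p)
  · intro h
    have : Mono j := Sheaf.mono_of_mono_pullback_snd hc j fun p => (h p).1
    exact ⟨this, Sheaf.areDisjoint_of_areDisjoint_pullback_snd hc i j fun p => (h p).2.1,
      fun V v hv => Sheaf.exists_comp_eq_of_pullback_snd hc i j (fun p => (h p).2.2) v hv⟩
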